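/- arXiv:2108.01651 — 2 statements merged into one kernel-verified Lean document; each statement's English description precedes it below -/
import Mathlib

section
/- Let α be a type, let a b : α with a ≠ b, and let l, l₀, l₁ be lists over α such that l is a prefix of l₀, l is a prefix of l₁, l₀ has no duplicate elements, and l₁ has no duplicate elements. Suppose a and b both occur in l₀ and both occur in l₁, that a occurs before b in l₀ (i.e., there are indices i < j with the i-th element of l₀ equal to a and the j-th element equal to b), and that b occurs before a in l₁. Then a does not occur in l and b does not occur in l. -/
/-!
An element occurring before a member of a prefix of a duplicate-free list lies in that prefix,
and the two keep their order there. So if `a` (say) lay in the common prefix `l`, then `b`, which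
precedes `a` in `l₁`, would lie in `l` as well, and `l` would order `a` and `b` both ways, which a
duplicate-free list cannot do.
-/

def OccursBefore {α : Type*} (l : List α) (a b : α) : Prop :=
  ∃ (i j : ℕ) (hi : i < l.length) (hj : j < l.length),
    i < j ∧ l.get ⟨i, hi⟩ = a ∧ l.get ⟨j, hj⟩ = b

namespace OccursBefore

variable {α : Type*} {l l' : List α} {a b : α}

theorem mem_left (h : OccursBefore l a b) : a ∈ l := by
  obtain ⟨i, -, hi, -, -, rfl, -⟩ := h
  exact List.get_mem l _

theorem not_swap (nd : l.Nodup) (hab : OccursBefore l a b) : ¬OccursBefore l b a := by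
  rintro ⟨j', i', hj', hi', hji', hb', ha'⟩
  obtain ⟨i, j, hi, hj, hij, rfl, rfl⟩ := hab
  simp only [List.get_eq_getElem, nd.getElem_inj_iff] at ha' hb'
  omega

/-- Injectivity of indexing pins `b` in `l'` to its index in the prefix `l`, so `a` comes
earlier still. -/
theorem of_prefix (hp : l <+: l') (nd : l'.Nodup) (hab : OccursBefore l' a b) (hb : b ∈ l) :
    OccursBefore l a b := by
  obtain ⟨i, j, hi, hj, hij, rfl, rfl⟩ := hab
  obtain ⟨k, hk, hkb⟩ := List.mem_iff_getElem.mp hb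
  rw [hp.getElem hk, List.get_eq_getElem, nd.getElem_inj_iff] at hkb
  subst hkb
  exact ⟨i, k, by omega, hk, hij, hp.getElem _, hp.getElem _⟩

end OccursBefore

theorem common_prefix_of_oppositely_ordered_not_mem_general
    {α : Type*} {a b : α} {l l₀ l₁ : List α}
    (h0 : l <+: l₀) (h1 : l <+: l₁)
    (nd0 : l₀.Nodup) (nd1 : l₁.Nodup)
    (hord0 : OccursBefore l₀ a b) (hord1 : OccursBefore l₁ b a) :
    a ∉ l ∧ b ∉ l := by
  have nd : l.Nodup := h0.nodup nd0
  have hb_not_mem : b ∉ l := fun hb =>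
    have hab := hord0.of_prefix h0 nd0 hb
    hab.not_swap nd (hord1.of_prefix h1 nd1 hab.mem_left)
  exact ⟨fun ha => hb_not_mem (hord1.of_prefix h1 nd1 ha).mem_left, hb_not_mem⟩

/-- If `l` is a common prefix of two duplicate-free lists `l₀` and `l₁` that both
contain the distinct elements `a` and `b`, with `a` before `b` in `l₀` but `b` before
`a` in `l₁`, then neither `a` nor `b` occurs in `l`. -/
theorem common_prefix_of_oppositely_ordered_not_mem
    {α : Type*} {a b : α} (hab : a ≠ b) {l l₀ l₁ : List α}
    (h0 : l <+: l₀) (h1 : l <+: l₁)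
    (nd0 : l₀.Nodup) (nd1 : l₁.Nodup)
    (ha0 : a ∈ l₀) (hb0 : b ∈ l₀) (ha1 : a ∈ l₁) (hb1 : b ∈ l₁)
    (hord0 : OccursBefore l₀ a b) (hord1 : OccursBefore l₁ b a) :
    a ∉ l ∧ b ∉ l :=
  common_prefix_of_oppositely_ordered_not_mem_general h0 h1 nd0 nd1 hord0 hord1
end

section
/- Let α be a type, p : α → Bool, and let a b : α with a ≠ b, p a = true, and p b = true. Let l, l₀, l₁ be lists over α without duplicate elements such that the sublist of l consisting of elements satisfying p (i.e., l.filter p) is a prefix of l₀.filter p and also a prefix of l₁.filter p. Suppose a and b both occur in l₀ and both occur in l₁, that a occurs before b in l₀ (i.e., there are indices i < j with the i-th element of l₀ equal to a and the j-th element equal to b), and that b occurs before a in l₁. Then a does not occur in l and b does not occur in l. -/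
open List in
theorem occursBefore_iff_pair_sublist {α : Type*} {l : List α} {a b : α} :
    OccursBefore l a b ↔ [a, b] <+ l := by
  rw [← not_iff_not]
  calc ¬OccursBefore l a b ↔ l.Pairwise (fun x y => ¬(x = a ∧ y = b)) := by
        simp only [OccursBefore, pairwise_iff_getElem, get_eq_getElem, not_exists, not_and]
    _ ↔ ¬[a, b] <+ l := by
        rw [pairwise_iff_forall_sublist]
        exact ⟨fun h hab => h hab ⟨rfl, rfl⟩, fun h x y hxy ⟨hx, hy⟩ => h (hx ▸ hy ▸ hxy)⟩

namespace List

variable {α : Type*} {a b : α}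

theorem Nodup.not_pair_sublist_swap {l : List α} (hl : l.Nodup) (h : [a, b] <+ l) :
    ¬[b, a] <+ l := by
  induction l with
  | nil => simp at h
  | cons c t ih =>
    rw [nodup_cons] at hl
    intro h'
    rcases h with _ | ⟨_, h⟩ <;> rcases h' with _ | ⟨_, h'⟩
    · exact ih hl.2 h h'
    · exact hl.1 (h.subset (by simp))
    · exact hl.1 (h'.subset (by simp))
    · exact hl.1 (singleton_sublist.1 ‹_›)

theorem IsPrefix.pair_sublist_of_mem {s t : List α} (hst : s <+: t) (ht : t.Nodup) (ha : a ∈ s)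
    (h : [b, a] <+ t) : [b, a] <+ s := by
  obtain ⟨u, rfl⟩ := hst
  obtain ⟨r₁, r₂, hr, h₁, h₂⟩ := sublist_append_iff.1 h
  have hau : a ∉ u := disjoint_of_nodup_append ht ha
  rcases r₂.eq_nil_or_concat with rfl | ⟨r, x, rfl⟩
  · simpa [hr] using h₁
  · obtain rfl : a = x := by simpa using congrArg getLast? hr
    exact absurd (h₂.subset (by simp)) hau

theorem notMem_of_isPrefix_of_pair_sublist {s t₀ t₁ : List α} (ht₀ : t₀.Nodup)
    (ht₁ : t₁.Nodup) (h₀ : s <+: t₀) (h₁ : s <+: t₁) (hab : [a, b] <+ t₀)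
    (hba : [b, a] <+ t₁) : a ∉ s := fun ha =>
  ht₀.not_pair_sublist_swap hab ((h₁.pair_sublist_of_mem ht₁ ha hba).trans h₀.sublist)

end List

theorem common_filter_prefix_of_oppositely_ordered_not_mem_general
    {α : Type*} (p : α → Bool) {a b : α}
    (hpa : p a = true) (hpb : p b = true) {l l₀ l₁ : List α}
    (nd0 : l₀.Nodup) (nd1 : l₁.Nodup)
    (h0 : l.filter p <+: l₀.filter p) (h1 : l.filter p <+: l₁.filter p)
    (hord0 : OccursBefore l₀ a b) (hord1 : OccursBefore l₁ b a) :
    a ∉ l ∧ b ∉ l := by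
  have hab : List.Sublist [a, b] (l₀.filter p) := by
    simpa [hpa, hpb] using (occursBefore_iff_pair_sublist.1 hord0).filter p
  have hba : List.Sublist [b, a] (l₁.filter p) := by
    simpa [hpa, hpb] using (occursBefore_iff_pair_sublist.1 hord1).filter p
  exact ⟨fun ha => List.notMem_of_isPrefix_of_pair_sublist (nd0.filter p) (nd1.filter p) h0 h1
      hab hba (List.mem_filter.2 ⟨ha, hpa⟩),
    fun hb => List.notMem_of_isPrefix_of_pair_sublist (nd1.filter p) (nd0.filter p) h1 h0
      hba hab (List.mem_filter.2 ⟨hb, hpb⟩)⟩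

/-- Let `a ≠ b` both satisfy `p`, and let `l, l₀, l₁` be duplicate-free lists such
that `l.filter p` is a prefix of both `l₀.filter p` and `l₁.filter p`.  If `a` and `b`
both occur in `l₀` and in `l₁`, with `a` before `b` in `l₀` but `b` before `a` in
`l₁`, then neither `a` nor `b` occurs in `l`. -/
theorem common_filter_prefix_of_oppositely_ordered_not_mem
    {α : Type*} (p : α → Bool) {a b : α} (hab : a ≠ b)
    (hpa : p a = true) (hpb : p b = true) {l l₀ l₁ : List α}
    (ndl : l.Nodup) (nd0 : l₀.Nodup) (nd1 : l₁.Nodup)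
    (h0 : l.filter p <+: l₀.filter p) (h1 : l.filter p <+: l₁.filter p)
    (ha0 : a ∈ l₀) (hb0 : b ∈ l₀) (ha1 : a ∈ l₁) (hb1 : b ∈ l₁)
    (hord0 : OccursBefore l₀ a b) (hord1 : OccursBefore l₁ b a) :
    a ∉ l ∧ b ∉ l :=
  common_filter_prefix_of_oppositely_ordered_not_mem_general p hpa hpb nd0 nd1 h0 h1 hord0 hord1
end
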